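/- arXiv:1607.08396 — 10 statements merged into one kernel-verified Lean document; each statement's English description precedes it below -/
import Mathlib

section
/- For every finite colouring of the natural numbers, there exist integers a, b > 1 such that a, b, and a^b all receive the same colour. -/
/-!
Put `a = 2 ^ x` and `b = 2 ^ v`; then `a ^ b = 2 ^ (x * 2 ^ v)`, so it suffices to find `x, v` with
`x`, `v` and `x * 2 ^ v` of one colour for the colouring `n ↦ f (2 ^ n)` of `ℕ+`.

In `βℕ+` the closure `Λ` of the additive idempotents is a closed left ideal for multiplication,
so it contains an ultrafilter `u` lying in a minimal left ideal. Let `Γ ∈ u` be a colour class.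
Minimality makes `T = {z | z⁻¹Γ ∈ u}` syndetic, witnessed by a finite set `F`; colouring `n` by
some `t ∈ F` with `t * 2 ^ n ∈ T`, one colour class `A` lies in an additive idempotent `p` with
`Γ ∈ p`, and idempotence of `p` gives `n, n + v ∈ A` with `v ∈ Γ`. Any `y` in both
`(t * 2 ^ n)⁻¹Γ` and `(t * 2 ^ (n + v))⁻¹Γ` then makes `x = t * 2 ^ n * y` work.
-/

open Filter Set

attribute [local instance] Ultrafilter.mul Ultrafilter.add Ultrafilter.semigroup
  Ultrafilter.addSemigroup

section CompactSemigroup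

variable {X : Type*} [TopologicalSpace X] [Semigroup X]

/-- Equivalently, `u` lies in a minimal left ideal of `X`. -/
def MemMinimalLeftIdeal (u : X) : Prop :=
  ∀ q, ∃ r, r * (q * u) = u

structure IsClosedLeftIdeal (L : Set X) : Prop where
  isClosed : IsClosed L
  nonempty : L.Nonempty
  mul_mem : ∀ q, ∀ x ∈ L, q * x ∈ L

theorem isClosedLeftIdeal_range_mul_right [CompactSpace X] [T2Space X]
    (hcont : ∀ r : X, Continuous (· * r)) (x : X) : IsClosedLeftIdeal (range (· * x)) where
  isClosed := by
    rw [← image_univ]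
    exact (isCompact_univ.image (hcont x)).isClosed
  nonempty := ⟨x * x, x, rfl⟩
  mul_mem := by
    rintro q _ ⟨r, rfl⟩
    exact ⟨q * r, mul_assoc q r x⟩

theorem IsClosedLeftIdeal.sInter_of_isChain [CompactSpace X] {c : Set (Set X)}
    (hc : ∀ L ∈ c, IsClosedLeftIdeal L) (hchain : IsChain (· ⊆ ·) c) (hne : c.Nonempty) :
    IsClosedLeftIdeal (⋂₀ c) where
  isClosed := isClosed_sInter fun L hL => (hc L hL).isClosed
  nonempty := by
    rw [sInter_eq_iInter]
    have : Nonempty c := hne.coe_sort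
    exact IsCompact.nonempty_iInter_of_directed_nonempty_isCompact_isClosed _
      (DirectedOn.directed_val (IsChain.directedOn hchain.symm)) (fun L => (hc L L.2).nonempty)
      (fun L => (hc L L.2).isClosed.isCompact) (fun L => (hc L L.2).isClosed)
  mul_mem q x hx := mem_sInter.mpr fun L hL => (hc L hL).mul_mem q x (hx L hL)

theorem IsClosedLeftIdeal.exists_mem_memMinimalLeftIdeal [CompactSpace X] [T2Space X]
    (hcont : ∀ r : X, Continuous (· * r)) {Λ : Set X} (hΛ : IsClosedLeftIdeal Λ) :
    ∃ u ∈ Λ, MemMinimalLeftIdeal u := by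
  obtain ⟨L, hLΛ, hL⟩ := zorn_superset_nonempty {L : Set X | IsClosedLeftIdeal L}
    (fun c hc hchain hne => ⟨⋂₀ c, IsClosedLeftIdeal.sInter_of_isChain hc hchain hne,
      fun _ => sInter_subset_of_mem⟩) Λ hΛ
  obtain ⟨u, hu⟩ := hL.prop.nonempty
  refine ⟨u, hLΛ hu, fun q => ?_⟩
  have hrange : range (· * (q * u)) = L := hL.eq_of_subset
    (isClosedLeftIdeal_range_mul_right hcont (q * u))
    (range_subset_iff.mpr fun r => hL.prop.mul_mem r _ (hL.prop.mul_mem q u hu))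
  obtain ⟨r, hr⟩ : u ∈ range (· * (q * u)) := hrange ▸ hu
  exact ⟨r, hr⟩

end CompactSemigroup

namespace Ultrafilter

variable {S : Type*}

theorem exists_preimage_singleton_mem {β : Type*} {s : Set β} (hs : s.Finite)
    (U : Ultrafilter S) (g : S → β) (hg : ∀ a, g a ∈ s) : ∃ b, g ⁻¹' {b} ∈ U := by
  obtain ⟨b, -, hb⟩ := (U.map g).eq_pure_of_finite_mem hs (mem_map.mpr (univ_mem' hg))
  exact ⟨b, by rw [← mem_map, hb]; rfl⟩

@[to_additive]
theorem mem_mul [Mul S] {U V : Ultrafilter S} {A : Set S} :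
    A ∈ U * V ↔ {a | {b | a * b ∈ A} ∈ V} ∈ U :=
  Iff.rfl

theorem exists_add_mem_of_add_self [Add S] {p : Ultrafilter S} (hp : p + p = p) {A B : Set S}
    (hA : A ∈ p) (hB : B ∈ p) : ∃ n ∈ A, ∃ v ∈ B, n + v ∈ A := by
  have hA' : {n | {v | n + v ∈ A} ∈ p} ∈ p := by rw [← mem_add, hp]; exact hA
  obtain ⟨n, hnA, hn⟩ := nonempty_of_mem (inter_mem hA hA')
  obtain ⟨v, hv, hvB⟩ := nonempty_of_mem (inter_mem hn hB)
  exact ⟨n, hnA, v, hvB, hv⟩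

theorem pure_mul [Mul S] (a : S) (p : Ultrafilter S) : pure a * p = p.map (a * ·) :=
  rfl

theorem map_mul_left_add [Mul S] [Add S] [LeftDistribClass S] (a : S) (p q : Ultrafilter S) :
    (p + q).map (a * ·) = p.map (a * ·) + q.map (a * ·) :=
  coe_inj.mp <| Filter.ext' fun _ => by simp [eventually_add, mul_add]

theorem mem_closure_iff {P : Set (Ultrafilter S)} {x : Ultrafilter S} :
    x ∈ closure P ↔ ∀ A ∈ x, ∃ p ∈ P, A ∈ p := by
  refine ⟨fun hx A hA => ?_, fun h => _root_.mem_closure_iff.mpr fun O hO hxO => ?_⟩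
  · obtain ⟨p, hpA, hpP⟩ := _root_.mem_closure_iff.mp hx _ (ultrafilter_isOpen_basic A) hA
    exact ⟨p, hpP, hpA⟩
  · obtain ⟨_, ⟨A, rfl⟩, hxA, hAO⟩ :=
      ultrafilterBasis_is_basis.exists_subset_of_mem_open hxO hO
    obtain ⟨p, hpP, hpA⟩ := h A hxA
    exact ⟨p, hAO hpA, hpP⟩

end Ultrafilter

section Syndetic

variable {S : Type*} [Semigroup S]

def IsSyndetic (A : Set S) : Prop :=
  ∃ F : Finset S, ∀ n, ∃ t ∈ F, t * n ∈ A

theorem MemMinimalLeftIdeal.isSyndetic_setOf_mem {u : Ultrafilter S} (hu : MemMinimalLeftIdeal u)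
    {G : Set S} (hG : G ∈ u) : IsSyndetic {z | {y | z * y ∈ G} ∈ u} := by
  set T := {z | {y | z * y ∈ G} ∈ u}
  have hcover : univ ⊆ ⋃ t : S, {q : Ultrafilter S | {n | t * n ∈ T} ∈ q} := by
    intro q _
    obtain ⟨r, hr⟩ := hu q
    have hT : T ∈ r * q := by rwa [← hr, ← mul_assoc] at hG
    obtain ⟨t, ht⟩ := Ultrafilter.nonempty_of_mem (Ultrafilter.mem_mul.mp hT)
    exact mem_iUnion.mpr ⟨t, ht⟩
  obtain ⟨F, hF⟩ := isCompact_univ.elim_finite_subcover _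
    (fun t => ultrafilter_isOpen_basic _) hcover
  refine ⟨F, fun n => ?_⟩
  simpa using hF (mem_univ (pure n))

end Syndetic

section LeftDistrib

variable {S : Type*} [Semigroup S] [AddSemigroup S] [LeftDistribClass S]

theorem isClosedLeftIdeal_closure_addIdempotents [Nonempty S] :
    IsClosedLeftIdeal (closure {p : Ultrafilter S | p + p = p}) where
  isClosed := isClosed_closure
  nonempty := (exists_idempotent_of_compact_t2_of_continuous_add_left
    Ultrafilter.continuous_add_left).imp fun _ hp => subset_closure hp
  mul_mem q x hx := by
    refine Ultrafilter.mem_closure_iff.mpr fun A hA => ?_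
    obtain ⟨a, ha⟩ := Ultrafilter.nonempty_of_mem (Ultrafilter.mem_mul.mp hA)
    obtain ⟨p, hp, hpA⟩ := Ultrafilter.mem_closure_iff.mp hx _ ha
    refine ⟨pure a * p, ?_, hpA⟩
    change pure a * p + pure a * p = pure a * p
    rw [Ultrafilter.pure_mul, ← Ultrafilter.map_mul_left_add, hp.out]

end LeftDistrib

theorem exists_mul_map_add_monochromatic {S ι : Type*} [CommSemigroup S] [AddSemigroup S]
    [LeftDistribClass S] [Nonempty S] [Finite ι] (φ : S → S) (hφ : ∀ a b, φ (a + b) = φ a * φ b)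
    (E : S → ι) : ∃ x v, E x = E v ∧ E x = E (x * φ v) := by
  obtain ⟨u, huΛ, hu⟩ := (isClosedLeftIdeal_closure_addIdempotents (S := S)
    ).exists_mem_memMinimalLeftIdeal Ultrafilter.continuous_mul_left
  obtain ⟨c, hΓu⟩ := u.exists_preimage_singleton_mem finite_univ E fun _ => mem_univ _
  obtain ⟨p, hp, hΓp⟩ := Ultrafilter.mem_closure_iff.mp huΛ _ hΓu
  obtain ⟨F, hF⟩ := hu.isSyndetic_setOf_mem hΓu
  choose t htF ht using fun n => hF (φ n)
  obtain ⟨t₀, hA⟩ := p.exists_preimage_singleton_mem F.finite_toSet t htF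
  obtain ⟨n, hn, v, hvΓ, hnv⟩ := Ultrafilter.exists_add_mem_of_add_self hp hA hΓp
  have htn : t (n + v) = t n := hnv.trans hn.symm
  obtain ⟨y, hy, hy'⟩ := Ultrafilter.nonempty_of_mem (inter_mem (ht n) (htn ▸ ht (n + v)))
  have hx : t n * φ n * y * φ v = t n * φ (n + v) * y := by
    rw [mul_right_comm, hφ, mul_assoc (t n)]
  have hEx : E (t n * φ n * y) = c := hy
  have hEv : E v = c := hvΓ
  have hExv : E (t n * φ (n + v) * y) = c := hy'
  exact ⟨t n * φ n * y, v, hEx.trans hEv.symm, by rw [hx, hEx, hExv]⟩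

/-- For every finite colouring of ℕ there exist a, b > 1 with a, b, a^b monochromatic. -/
theorem exp_triple_partition_regular (k : ℕ) (f : ℕ → Fin k) :
    ∃ a b : ℕ, 1 < a ∧ 1 < b ∧ f a = f b ∧ f a = f (a ^ b) := by
  obtain ⟨x, v, hxv, hxxv⟩ := exists_mul_map_add_monochromatic (fun n : ℕ+ => 2 ^ (n : ℕ))
    (fun a b => by simp [pow_add]) (fun n : ℕ+ => f (2 ^ (n : ℕ)))
  refine ⟨2 ^ (x : ℕ), 2 ^ (v : ℕ), Nat.one_lt_two_pow x.ne_zero, Nat.one_lt_two_pow v.ne_zero,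
    hxv, ?_⟩
  simpa [← pow_mul] using hxxv
end

section
/- For every m and k, there exists N = N(k,m) such that every k-colouring of the powerset of {1,...,N} admits subsets A_1, ..., A_m of {1,...,N} with max A_i < min A_{i+1} for each i < m, such that the family of all nonempty unions of the A_i is monochromatic. -/
/-!
Colour `n : ℕ` by the colour of its set of binary digits. Hindman's theorem gives positive
`b₀, b₁, …` all of whose finite sums have one colour. Grouping the `bᵢ` into disjoint blocks whose
sums `dⱼ` satisfy `2 ^ dᵢ ∣ dⱼ` for `i < j` (pigeonhole on residues), the digit sets of the `dⱼ`
are ordered, and the digit set of a sum of distinct `dⱼ` is the union of theirs. This is the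
infinite version; the finite one follows by compactness, applying it to an ultrafilter limit of
putative counterexamples.
-/

open Finset

namespace Finset

theorem two_pow_le_of_mem_equivBitIndices {n i : ℕ} (hi : i ∈ equivBitIndices n) : 2 ^ i ≤ n :=
  Nat.two_pow_le_of_mem_bitIndices (by simpa using hi)

theorem le_of_mem_equivBitIndices_of_two_pow_dvd {M n i : ℕ} (hn : 2 ^ M ∣ n)
    (hi : i ∈ equivBitIndices n) : M ≤ i := by
  obtain ⟨z, rfl⟩ := hn
  simp only [equivBitIndices_apply, Nat.bitIndices_two_pow_mul, List.mem_toFinset,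
    List.mem_map] at hi
  obtain ⟨j, -, rfl⟩ := hi
  exact Nat.le_add_left M j

theorem lt_of_mem_equivBitIndices_of_two_pow_dvd {m n i j : ℕ} (hmn : 2 ^ m ∣ n)
    (hi : i ∈ equivBitIndices m) (hj : j ∈ equivBitIndices n) : i < j :=
  calc i < 2 ^ i := Nat.lt_two_pow_self
    _ ≤ m := two_pow_le_of_mem_equivBitIndices hi
    _ ≤ j := le_of_mem_equivBitIndices_of_two_pow_dvd hmn hj

theorem equivBitIndices_sum {ι : Type*} {I : Finset ι} {d : ι → ℕ}
    (hd : (I : Set ι).PairwiseDisjoint (equivBitIndices ∘ d)) :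
    equivBitIndices (∑ j ∈ I, d j) = I.sup (equivBitIndices ∘ d) := by
  classical
  rw [← Equiv.eq_symm_apply, equivBitIndices_symm_apply, sup_eq_biUnion,
    sum_biUnion hd]
  simp

theorem equivBitIndices_nonempty {n : ℕ} (hn : n ≠ 0) : (equivBitIndices n).Nonempty := by
  rw [nonempty_iff_ne_empty, Ne, ← Equiv.eq_symm_apply]
  simpa using hn

end Finset

theorem Hindman.pos_of_mem_FS {a : Stream' ℕ} (ha : ∀ i, 0 < a.get i) {n : ℕ}
    (hn : n ∈ Hindman.FS a) : 0 < n := by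
  induction hn with
  | head' a => exact ha 0
  | tail' a m _ ih => exact ih fun i => ha (i + 1)
  | cons' a m _ _ => exact Nat.add_pos_left (ha 0) m

theorem Hindman.exists_pos_FS_monochromatic {κ : Type*} [Finite κ] (f : ℕ → κ) :
    ∃ (c : κ) (a : Stream' ℕ), Hindman.FS a ⊆ {n | 0 < n ∧ f n = c} := by
  obtain ⟨-, ⟨c, rfl⟩, a, ha⟩ := Hindman.FS_partition_regular (Stream'.const 1)
    (Set.range fun c => {n | 0 < n ∧ f n = c}) (Set.finite_range _) fun n hn =>
      Set.mem_sUnion.2 ⟨_, ⟨f n, rfl⟩, pos_of_mem_FS (fun _ => Nat.one_pos) hn, rfl⟩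
  exact ⟨c, a, ha⟩

theorem exists_finset_ge_dvd_sum (b : ℕ → ℕ) (n : ℕ) {L : ℕ} (hL : L ≠ 0) :
    ∃ T : Finset ℕ, T.Nonempty ∧ (∀ t ∈ T, n ≤ t) ∧ L ∣ ∑ t ∈ T, b t := by
  have : NeZero L := ⟨hL⟩
  obtain ⟨r, hr⟩ := Finite.exists_infinite_fiber fun t => (b (n + t) : ZMod L)
  obtain ⟨T, hTr, hTcard⟩ := (Set.infinite_coe_iff.1 hr).exists_subset_card_eq L
  refine ⟨T.map (addLeftEmbedding n), ?_, by simp, ?_⟩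
  · rw [← card_pos, card_map, hTcard]
    exact Nat.pos_of_ne_zero hL
  · rw [← ZMod.natCast_eq_zero_iff, sum_map, Nat.cast_sum]
    calc ∑ t ∈ T, (b (n + t) : ZMod L) = ∑ _t ∈ T, r := sum_congr rfl fun t ht => hTr ht
      _ = 0 := by rw [sum_const, hTcard, nsmul_eq_mul, ZMod.natCast_self, zero_mul]

theorem exists_blocks_two_pow_dvd (b : ℕ → ℕ) :
    ∃ T : ℕ → Finset ℕ, (∀ j, (T j).Nonempty) ∧
      ∀ i j, i < j → Disjoint (T i) (T j) ∧ 2 ^ (∑ t ∈ T i, b t) ∣ ∑ t ∈ T j, b t := by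
  refine exists_seq_of_forall_finset_exists (fun T => T.Nonempty)
    (fun S T => Disjoint S T ∧ 2 ^ (∑ t ∈ S, b t) ∣ ∑ t ∈ T, b t) fun s _ => ?_
  obtain ⟨T, hT, hge, hdvd⟩ := exists_finset_ge_dvd_sum b ((s.sup id).sup id + 1)
    (L := ∏ S ∈ s, 2 ^ ∑ t ∈ S, b t) (by positivity)
  refine ⟨T, hT, fun S hS =>
    ⟨disjoint_left.2 fun x hxS hxT => ?_, (dvd_prod_of_mem _ hS).trans hdvd⟩⟩
  have hx_le : x ≤ (s.sup id).sup id := le_sup (f := id) (le_sup (f := id) hS hxS)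
  have hx_gt := hge x hxT
  omega

theorem exists_seq_ordered_unions_monochromatic {κ : Type*} [Finite κ] (F : Finset ℕ → κ) :
    ∃ (A : ℕ → Finset ℕ) (c : κ), (∀ i, (A i).Nonempty) ∧
      (∀ i j, i < j → ∀ x ∈ A i, ∀ y ∈ A j, x < y) ∧
      ∀ I : Finset ℕ, I.Nonempty → F (I.sup A) = c := by
  classical
  obtain ⟨c, b, hb⟩ := Hindman.exists_pos_FS_monochromatic (F ∘ equivBitIndices)
  obtain ⟨T, hT_ne, hT⟩ := exists_blocks_two_pow_dvd b.get
  set d : ℕ → ℕ := fun j => ∑ t ∈ T j, b.get t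
  have hd : ∀ j, d j ≠ 0 := fun j =>
    (sum_pos (fun t _ => (hb (Hindman.FS.singleton b t)).1) (hT_ne j)).ne'
  have hlt : ∀ i j, i < j → ∀ x ∈ equivBitIndices (d i), ∀ y ∈ equivBitIndices (d j), x < y :=
    fun i j hij _ hx _ hy => lt_of_mem_equivBitIndices_of_two_pow_dvd (hT i j hij).2 hx hy
  refine ⟨equivBitIndices ∘ d, c, fun j => equivBitIndices_nonempty (hd j), hlt, fun I hI => ?_⟩
  have hT_disj : (I : Set ℕ).PairwiseDisjoint T :=
    ((pairwise_disjoint_on T).2 fun i j hij => (hT i j hij).1).set_pairwise _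
  have hA_disj : (I : Set ℕ).PairwiseDisjoint (equivBitIndices ∘ d) :=
    ((pairwise_disjoint_on _).2 fun i j hij => disjoint_left.2 fun x hi hj =>
      (hlt i j hij x hi x hj).false).set_pairwise _
  have hsum : ∑ t ∈ I.biUnion T, b.get t = ∑ j ∈ I, d j := sum_biUnion hT_disj
  rw [← equivBitIndices_sum hA_disj, ← hsum]
  exact (hb (Hindman.FS.finsetSum b _ (hI.biUnion fun j _ => hT_ne j))).2

theorem Ultrafilter.exists_forall_eventually_eq {ι α κ : Type*} [Finite κ] (U : Ultrafilter ι)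
    (F : ι → α → κ) : ∃ G : α → κ, ∀ x, ∀ᶠ i in U, F i x = G x := by
  have (x : α) : ∃ c, ∀ᶠ i in U, F i x = c := by
    obtain ⟨c, hc⟩ := (U.map (F · x)).eq_pure_of_finite
    exact ⟨c, Ultrafilter.mem_map.1 (hc ▸ Ultrafilter.mem_pure.2 rfl : {c} ∈ U.map (F · x))⟩
  exact Classical.axiomOfChoice this

/-- Ordered finite unions theorem: every k-colouring of the powerset of [N]
admits ordered sets A_1 < ⋯ < A_m all of whose nonempty unions are monochromatic. -/
theorem ordered_finite_unions (m k : ℕ) :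
    ∃ N : ℕ, ∀ F : Finset ℕ → Fin k,
      ∃ A : Fin m → Finset ℕ,
        (∀ i, A i ⊆ Finset.Icc 1 N) ∧
        (∀ i, (A i).Nonempty) ∧
        (∀ i j : Fin m, i < j → ∀ x ∈ A i, ∀ y ∈ A j, x < y) ∧
        ∃ c : Fin k, ∀ I : Finset (Fin m), I.Nonempty → F (I.sup A) = c := by
  by_contra! hbad
  choose F hF using hbad
  obtain ⟨G, hG⟩ := (Filter.hyperfilter ℕ).exists_forall_eventually_eq F
  obtain ⟨A, c, hA_ne, hA_lt, hA_mono⟩ := exists_seq_ordered_unions_monochromatic G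
  -- every element of `A (i + 1)` exceeds one of `A 0`, hence is positive
  set B : Fin m → Finset ℕ := fun i => A (i + 1)
  obtain ⟨N, hN_ge, hN_eq⟩ : ∃ N, (univ.sup B).sup id ≤ N ∧
      ∀ I : Finset (Fin m), F N (I.sup B) = G (I.sup B) :=
    (((Filter.eventually_ge_atTop _).filter_mono Nat.hyperfilter_le_atTop).and
      (Filter.eventually_all.2 fun I => hG _)).exists
  obtain ⟨a₀, ha₀⟩ := hA_ne 0
  have hB_Icc (i : Fin m) : B i ⊆ Icc 1 N := fun x hx => mem_Icc.2
    ⟨(Nat.zero_le a₀).trans_lt (hA_lt 0 _ i.val.succ_pos a₀ ha₀ x hx),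
      (le_sup (f := id) (mem_sup.2 ⟨i, mem_univ _, hx⟩)).trans hN_ge⟩
  obtain ⟨I, hI, hFI⟩ := hF N B hB_Icc (fun i => hA_ne _)
    (fun i j hij => hA_lt _ _ (Nat.succ_lt_succ hij)) c
  refine hFI ((hN_eq I).trans ?_)
  rw [← hA_mono (I.image (·.val + 1)) (hI.image _), sup_image]
  rfl
end

section
/- For every k and m there exists an integer N(k,m) such that every k-colouring of {1,...,N(k,m)} admits x_1,...,x_m in {1,...,N(k,m)} such that the finite sum set FS(x_1,...,x_m) is monochromatic. -/
/-!
Hindman's theorem gives, for each finite colouring of the positive integers, an infinite sequence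
all of whose finite sums have the same colour; its first `m` terms work for `N` the sum of these
terms. This `N` depends on the colouring, and compactness of the space of colourings `ℕ → Fin k`
makes it uniform, since whether a colouring works for a given `N` depends only on its values
up to `N`.
-/

theorem Hindman.FS_subset_of_forall_get_mem {M : Type*} [AddSemigroup M] {S : AddSubsemigroup M}
    {a : Stream' M} (ha : ∀ i, a.get i ∈ S) : Hindman.FS a ⊆ S := by
  intro x hx
  induction hx with
  | head' a => exact ha 0
  | tail' a x _ ih => exact ih fun i => ha (i + 1)
  | cons' a x _ ih => exact S.add_mem (ha 0) (ih fun i => ha (i + 1))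

theorem Hindman.exists_FS_pos_monochromatic {α : Type*} [Finite α] (f : ℕ → α) :
    ∃ (a : Stream' ℕ) (c : α), ∀ n ∈ Hindman.FS a, 0 < n ∧ f n = c := by
  -- Partitioning `FS (const 1)` rather than `ℕ` keeps `0` out of the resulting sum set.
  let pos : AddSubsemigroup ℕ := ⟨Set.Ioi 0, fun hx _ => Nat.add_pos_left hx _⟩
  have hpos : Hindman.FS (Stream'.const 1) ⊆ pos :=
    Hindman.FS_subset_of_forall_get_mem fun _ => Nat.one_pos
  obtain ⟨_, ⟨c, rfl⟩, a, ha⟩ := Hindman.FS_partition_regular (Stream'.const 1)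
    (Set.range fun c => {n | 0 < n ∧ f n = c}) (Set.finite_range _)
    fun n hn => Set.mem_sUnion.2 ⟨_, ⟨f n, rfl⟩, hpos hn, rfl⟩
  exact ⟨a, c, ha⟩

/-- Compactness of `ℕ → α`: `{g | P N g}` is open because it only depends on `g` below `N`. -/
theorem exists_forall_of_forall_exists_of_local {α : Type*} [Finite α] (P : ℕ → (ℕ → α) → Prop)
    (mono : ∀ {N N'} g, N ≤ N' → P N g → P N' g)
    (congr : ∀ N g g', (∀ n ≤ N, g n = g' n) → P N g → P N g')
    (h : ∀ g, ∃ N, P N g) : ∃ N, ∀ g, P N g := by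
  let : TopologicalSpace α := ⊥
  have : DiscreteTopology α := ⟨rfl⟩
  have hopen : ∀ N, IsOpen {g | P N g} := fun N => isOpen_iff_forall_mem_open.2 fun g hg =>
    ⟨(Set.Iic N).pi fun n => {g n}, fun g' hg' => congr N g g' (fun n hn => (hg' n hn).symm) hg,
      isOpen_set_pi (Set.finite_Iic N) fun _ _ => isOpen_discrete _, fun _ _ => rfl⟩
  obtain ⟨N, hN⟩ := isCompact_univ.elim_directed_cover _ hopen
    (fun g _ => Set.mem_iUnion.2 (h g)) (Monotone.directed_le fun _ _ hle g => mono g hle)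
  exact ⟨N, fun g => hN (Set.mem_univ g)⟩

def HasMonochromaticFSIn {α : Type*} (m N : ℕ) (f : ℕ → α) : Prop :=
  ∃ x : Fin m → ℕ, (∀ i, x i ∈ Finset.Icc 1 N) ∧ ∃ c : α, ∀ I : Finset (Fin m), I.Nonempty →
    (∑ i ∈ I, x i) ∈ Finset.Icc 1 N ∧ f (∑ i ∈ I, x i) = c

namespace HasMonochromaticFSIn

variable {α : Type*} {m N : ℕ} {f : ℕ → α}

theorem mono {N' : ℕ} (h : HasMonochromaticFSIn m N f) (hN : N ≤ N') :
    HasMonochromaticFSIn m N' f := by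
  obtain ⟨x, hx, c, hc⟩ := h
  have hIcc := Finset.Icc_subset_Icc_right (a := 1) hN
  exact ⟨x, fun i => hIcc (hx i), c, fun I hI => ⟨hIcc (hc I hI).1, (hc I hI).2⟩⟩

theorem congr {g : ℕ → α} (h : HasMonochromaticFSIn m N f) (hfg : ∀ n ≤ N, f n = g n) :
    HasMonochromaticFSIn m N g := by
  obtain ⟨x, hx, c, hc⟩ := h
  refine ⟨x, hx, c, fun I hI => ⟨(hc I hI).1, ?_⟩⟩
  rw [← hfg _ (Finset.mem_Icc.1 (hc I hI).1).2]
  exact (hc I hI).2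

theorem exists_of_finite [Finite α] (m : ℕ) (f : ℕ → α) : ∃ N, HasMonochromaticFSIn m N f := by
  obtain ⟨a, c, ha⟩ := Hindman.exists_FS_pos_monochromatic f
  have hsum : ∀ I : Finset (Fin m), I.Nonempty → ∑ i ∈ I, a.get i ∈ Hindman.FS a := fun I hI => by
    simpa only [Finset.sum_map, Fin.valEmbedding_apply] using
      Hindman.FS.finsetSum a (I.map Fin.valEmbedding) hI.map
  have hle : ∀ I : Finset (Fin m), ∑ i ∈ I, a.get i ≤ ∑ i : Fin m, a.get i :=
    fun I => Finset.sum_le_sum_of_subset I.subset_univ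
  have hmem : ∀ I : Finset (Fin m), I.Nonempty →
      ∑ i ∈ I, a.get i ∈ Finset.Icc 1 (∑ i : Fin m, a.get i) :=
    fun I hI => Finset.mem_Icc.2 ⟨(ha _ (hsum I hI)).1, hle I⟩
  refine ⟨∑ i : Fin m, a.get i, fun i => a.get i, fun i => ?_, c,
    fun I hI => ⟨hmem I hI, (ha _ (hsum I hI)).2⟩⟩
  simpa using hmem {i} (Finset.singleton_nonempty i)

end HasMonochromaticFSIn

/-- Folkman–Sanders finite sums theorem, finitary form. -/
theorem finite_sums_theorem (k m : ℕ) :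
    ∃ N : ℕ, ∀ f : ℕ → Fin k,
      ∃ x : Fin m → ℕ,
        (∀ i, x i ∈ Finset.Icc 1 N) ∧
        ∃ c : Fin k, ∀ I : Finset (Fin m), I.Nonempty →
          (∑ i ∈ I, x i) ∈ Finset.Icc 1 N ∧ f (∑ i ∈ I, x i) = c :=
  exists_forall_of_forall_exists_of_local (HasMonochromaticFSIn m)
    (fun _ hN h => h.mono hN) (fun _ _ _ hfg h => h.congr hfg)
    (HasMonochromaticFSIn.exists_of_finite m)
end

section
/- Let k, r be positive integers, f_1,...,f_{r+1} : ℕ → Fin k be colourings, and c_1,...,c_r colours such that c_1,...,c_r is large with respect to f_1,...,f_r. Then there exists a colour c_{r+1} such that c_1,...,c_{r+1} is large with respect to f_1,...,f_{r+1}. -/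
/-!
Finitary van der Waerden (deduced from Hales–Jewett) gives, for each `M`, a bound `N` such that
every colouring of a progression of length `N` is monochromatic on a sub-progression of length `M`.
Applied to a progression of length `N` on which `f₁, …, f_r` take the colours `c`, this gives for
each `M` some colour `c'` that works at length `M`. Since working at length `M` is inherited by
shorter lengths and there are finitely many colours, one `c'` works for all `M`.
-/

open Finset

theorem Finite.exists_forall_of_antitone {κ : Type*} [Finite κ] (P : κ → ℕ → Prop)
    (hP : ∀ c, Antitone (P c)) (h : ∀ n, ∃ c, P c n) : ∃ c, ∀ n, P c n := by
  choose g hg using h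
  obtain ⟨c, hc⟩ := Finite.exists_infinite_fiber g
  refine ⟨c, fun n => ?_⟩
  obtain ⟨m, hm, hnm⟩ := (Set.infinite_coe_iff.mp hc).exists_gt n
  exact hP c hnm.le (hm ▸ hg m)

namespace Combinatorics

theorem Line.sum_apply {α ι β : Type*} [Fintype ι] [AddCommMonoid β] (l : Line α ι)
    (g : α → β) (x : α) :
    ∑ i, g (l x i) = ∑ i, (l.idxFun i).elim 0 g + #{i | (l.idxFun i).isNone} • g x := by
  rw [← sum_const, sum_filter, ← sum_add_distrib]
  refine sum_congr rfl fun i _ => ?_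
  rcases h : l.idxFun i <;> simp [h]

/-- Summing the coordinates of a monochromatic combinatorial line in `ι → Fin M` gives a
monochromatic progression inside `[0, |ι| * M]`. -/
theorem exists_bound_mono_ap (κ : Type*) [Finite κ] (M : ℕ) :
    ∃ N, ∀ C : ℕ → κ, ∃ a d, 0 < d ∧ ∃ c, ∀ j < M, a + j * d < N ∧ C (a + j * d) = c := by
  obtain ⟨ι, _, hι⟩ := Line.exists_mono_in_high_dimension (Fin M) κ
  refine ⟨Fintype.card ι * M + 1, fun C => ?_⟩
  obtain ⟨l, c, hl⟩ := hι fun v => C (∑ i, (v i : ℕ))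
  have hd : 0 < #{i | (l.idxFun i).isNone} :=
    card_pos.mpr ⟨l.proper.choose, by simp [l.proper.choose_spec]⟩
  refine ⟨∑ i, (l.idxFun i).elim 0 (↑), _, hd, c, fun j hj => ?_⟩
  have hsum := l.sum_apply (fun x => (x : ℕ)) ⟨j, hj⟩
  rw [smul_eq_mul, mul_comm] at hsum
  rw [← hsum]
  refine ⟨Nat.lt_succ_of_le ?_, hl ⟨j, hj⟩⟩
  simpa using sum_le_card_nsmul univ _ M fun i _ => (l ⟨j, hj⟩ i).isLt.le

end Combinatorics

theorem large_sequence_extension_general (k r : ℕ)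
    (f : Fin (r + 1) → ℕ → Fin k) (c : Fin r → Fin k)
    (hlarge : ∀ M : ℕ, ∃ a d : ℕ, 0 < d ∧
      ∀ i : Fin r, ∀ j < M, f i.castSucc (a + j * d) = c i) :
    ∃ c' : Fin k, ∀ M : ℕ, ∃ a d : ℕ, 0 < d ∧
      (∀ i : Fin r, ∀ j < M, f i.castSucc (a + j * d) = c i) ∧
      (∀ j < M, f (Fin.last r) (a + j * d) = c') := by
  refine Finite.exists_forall_of_antitone _ ?_ fun M => ?_
  · rintro c' m n hmn ⟨a, d, hd, hc, hc'⟩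
    exact ⟨a, d, hd, fun i j hj => hc i j (hj.trans_le hmn), fun j hj => hc' j (hj.trans_le hmn)⟩
  obtain ⟨N, hN⟩ := Combinatorics.exists_bound_mono_ap (Fin k) M
  obtain ⟨a, e, he, hc⟩ := hlarge N
  obtain ⟨b, d, hd, c', hbd⟩ := hN fun j => f (Fin.last r) (a + j * e)
  have hsub : ∀ j, a + b * e + j * (d * e) = a + (b + j * d) * e := fun j => by ring
  refine ⟨c', a + b * e, d * e, Nat.mul_pos hd he, fun i j hj => ?_, fun j hj => ?_⟩
  · rw [hsub]; exact hc i _ (hbd j hj).1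
  · rw [hsub]; exact (hbd j hj).2

/-- Extension lemma for large colour sequences: if c_1,…,c_r is large with
respect to f_1,…,f_r then there is c_{r+1} making c_1,…,c_{r+1} large with
respect to f_1,…,f_{r+1}. -/
theorem large_sequence_extension (k r : ℕ) (hk : 0 < k) (hr : 0 < r)
    (f : Fin (r + 1) → ℕ → Fin k) (c : Fin r → Fin k)
    (hlarge : ∀ M : ℕ, ∃ a d : ℕ, 0 < d ∧
      ∀ i : Fin r, ∀ j < M, f i.castSucc (a + j * d) = c i) :
    ∃ c' : Fin k, ∀ M : ℕ, ∃ a d : ℕ, 0 < d ∧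
      (∀ i : Fin r, ∀ j < M, f i.castSucc (a + j * d) = c i) ∧
      (∀ j < M, f (Fin.last r) (a + j * d) = c') :=
  large_sequence_extension_general k r f c hlarge
end

section
/- For every r ≥ 1 there exists a finite colouring f : ℕ → Fin (r+3) admitting no monochromatic pair {b, a^b} with a, b ≥ 2 and the r-fold iterated base-2 logarithm of a at most b. -/
/-!
Colour `n` by `logStar n` modulo `r + 3`. For `a, b ≥ 2` we have `b ≤ log₂ (a ^ b)`, so `a ^ b`
has strictly larger log-star than `b`. Conversely `a ^ b < 2 ^ ((log₂ a + 1) * b)` and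
`(log₂ a + 1) * b ≤ 2 ^ (2m)` with `m = max b (log₂ a)`, so three further logarithms bring `a ^ b`
below `m`; and `log₂^[r] a ≤ b` gives `logStar a ≤ logStar b + r`. Hence the log-star of `a ^ b`
exceeds that of `b` by between `1` and `r + 2`, which is never a multiple of `r + 3`.
-/

def logStar (n : ℕ) : ℕ :=
  if n ≤ 1 then 0 else logStar (Nat.log 2 n) + 1
decreasing_by exact Nat.log_lt_self 2 (by omega)

lemma logStar_of_le_one {n : ℕ} (h : n ≤ 1) : logStar n = 0 := by
  rw [logStar, if_pos h]

lemma logStar_of_two_le {n : ℕ} (h : 2 ≤ n) : logStar n = logStar (Nat.log 2 n) + 1 := by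
  rw [logStar, if_neg (by omega)]

lemma logStar_le_logStar_log_add_one (n : ℕ) : logStar n ≤ logStar (Nat.log 2 n) + 1 := by
  rcases le_or_gt n 1 with h | h
  · simp [logStar_of_le_one h]
  · exact (logStar_of_two_le h).le

lemma logStar_mono : Monotone logStar := by
  intro n m hnm
  induction m using Nat.strong_induction_on generalizing n with
  | _ m ih =>
    rcases le_or_gt n 1 with hn | hn
    · simp [logStar_of_le_one hn]
    · rw [logStar_of_two_le hn, logStar_of_two_le (n := m) (by omega)]
      exact Nat.succ_le_succ <|
        ih _ (Nat.log_lt_self 2 (by omega)) (Nat.log_mono_right hnm)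

lemma logStar_le_of_le_two_pow {x y : ℕ} (h : x ≤ 2 ^ y) : logStar x ≤ logStar y + 1 := by
  have hlog : Nat.log 2 x ≤ y := by
    simpa [Nat.log_pow] using Nat.log_mono_right (b := 2) h
  exact (logStar_le_logStar_log_add_one x).trans (by gcongr; exact logStar_mono hlog)

lemma logStar_le_logStar_iterate_add (a k : ℕ) :
    logStar a ≤ logStar ((Nat.log 2)^[k] a) + k := by
  induction k with
  | zero => simp
  | succ k ih =>
    rw [Function.iterate_succ_apply']
    have := logStar_le_logStar_log_add_one ((Nat.log 2)^[k] a)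
    omega

lemma logStar_lt_logStar_pow {a b : ℕ} (ha : 2 ≤ a) (hb : b ≠ 0) :
    logStar b < logStar (a ^ b) := by
  have hpow : 2 ^ b ≤ a ^ b := Nat.pow_le_pow_left ha b
  have hb_le : b ≤ Nat.log 2 (a ^ b) := by
    simpa [Nat.log_pow] using Nat.log_mono_right (b := 2) hpow
  have htwo : 2 ≤ a ^ b :=
    le_trans (Nat.le_self_pow hb 2) hpow
  rw [logStar_of_two_le htwo]
  exact Nat.lt_succ_of_le (logStar_mono hb_le)

lemma add_self_le_two_pow {m : ℕ} (h : 2 ≤ m) : m + m ≤ 2 ^ m := by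
  induction m, h using Nat.le_induction with
  | base => norm_num
  | succ m _ ih => rw [pow_succ]; omega

lemma logStar_pow_le_logStar_max_add_three (a : ℕ) {b : ℕ} (hb : 2 ≤ b) :
    logStar (a ^ b) ≤ logStar (max b (Nat.log 2 a)) + 3 := by
  set m := max b (Nat.log 2 a)
  have hm : 2 ≤ m := hb.trans (le_max_left _ _)
  have h₁ : a ^ b ≤ 2 ^ ((Nat.log 2 a + 1) * b) := by
    rw [pow_mul]
    exact Nat.pow_le_pow_left (Nat.lt_pow_succ_log_self one_lt_two a).le b
  have h₂ : (Nat.log 2 a + 1) * b ≤ 2 ^ (m + m) := by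
    rw [pow_add]
    apply Nat.mul_le_mul
    · exact (Nat.lt_two_pow_self).trans_le (Nat.pow_le_pow_right two_pos (le_max_right _ _))
    · exact (Nat.lt_two_pow_self).le.trans (Nat.pow_le_pow_right two_pos (le_max_left _ _))
  have h₃ := logStar_le_of_le_two_pow (add_self_le_two_pow hm)
  have := logStar_le_of_le_two_pow h₁
  have := logStar_le_of_le_two_pow h₂
  omega

lemma Nat.mod_ne_mod_of_lt_of_lt_add {n m k : ℕ} (h₁ : n < m) (h₂ : m < n + k) :
    n % k ≠ m % k := by
  intro h
  have := Nat.le_of_dvd (by omega) ((Nat.modEq_iff_dvd' h₁.le).mp h)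
  omega

/-- For every r ≥ 1 there is an (r+3)-colouring of ℕ with no monochromatic pair
{b, a^b} where a, b ≥ 2 and the r-fold iterated base-2 logarithm of a is at most b. -/
theorem log_star_colouring (r : ℕ) (hr : 1 ≤ r) :
    ∃ f : ℕ → Fin (r + 3), ∀ a b : ℕ, 2 ≤ a → 2 ≤ b →
      (Nat.log 2)^[r] a ≤ b → f b ≠ f (a ^ b) := by
  refine ⟨fun n => ⟨logStar n % (r + 3), Nat.mod_lt _ (by omega)⟩, fun a b ha hb hlog => ?_⟩
  have hlower := logStar_lt_logStar_pow ha (by omega : b ≠ 0)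
  have hupper := logStar_pow_le_logStar_max_add_three a hb
  have hla : logStar a ≤ logStar b + r :=
    (logStar_le_logStar_iterate_add a r).trans (Nat.add_le_add_right (logStar_mono hlog) r)
  rw [logStar_of_two_le ha] at hla
  rw [logStar_mono.map_max] at hupper
  rw [ne_eq, Fin.mk.injEq]
  exact Nat.mod_ne_mod_of_lt_of_lt_add hlower (by omega)
end

section
/- There exists a finite colouring of ℕ admitting no monochromatic pair {b, a^b} with 2 ≤ a and a ≤ 2^b (i.e. log a ≤ b) and b ≥ 2. In particular, there is a finite colouring with no monochromatic quadruple of the form {a, b, a^b, b^a} with a, b ≥ 2. -/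
lemma mul_self_lt_two_pow_succ (b : ℕ) : b * b < 2 ^ (b + 1) := by
  induction b with
  | zero => norm_num
  | succ b ih =>
    have : b < 2 ^ b := Nat.lt_two_pow_self
    calc (b + 1) * (b + 1) = b * b + (2 * b + 1) := by ring
      _ < 2 ^ (b + 1) + 2 ^ (b + 1) := by rw [pow_succ]; omega
      _ = 2 ^ (b + 1 + 1) := by ring

lemma log_two_mul_self_le (b : ℕ) : Nat.log 2 (b * b) ≤ b :=
  Nat.lt_succ_iff.mp (Nat.log_lt_of_lt_pow' b.succ_ne_zero (mul_self_lt_two_pow_succ b))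

lemma logStar_lt_of_two_pow_le {b n : ℕ} (hb : 0 < b) (h : 2 ^ b ≤ n) :
    logStar b < logStar n := by
  have hn : 2 ≤ n := le_trans (Nat.le_self_pow hb.ne' 2) h
  rw [logStar_of_two_le hn, Nat.lt_succ_iff]
  exact logStar_mono (Nat.le_log_of_pow_le one_lt_two h)

lemma logStar_le_add_two_of_le_two_pow_mul_self {b n : ℕ} (h : n ≤ 2 ^ (b * b)) :
    logStar n ≤ logStar b + 2 := by
  have hlog : Nat.log 2 n ≤ b * b := by
    simpa [Nat.log_pow one_lt_two] using Nat.log_mono_right (b := 2) h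
  have hloglog : Nat.log 2 (Nat.log 2 n) ≤ b :=
    (Nat.log_mono_right hlog).trans (log_two_mul_self_le b)
  calc logStar n ≤ logStar (Nat.log 2 n) + 1 := logStar_le_logStar_log_add_one n
    _ ≤ logStar (Nat.log 2 (Nat.log 2 n)) + 1 + 1 :=
      Nat.succ_le_succ (logStar_le_logStar_log_add_one _)
    _ ≤ logStar b + 2 := by have := logStar_mono hloglog; omega

lemma logStar_mod_three_ne_pow {a b : ℕ} (ha : 2 ≤ a) (hb : 0 < b) (hab : a ≤ 2 ^ b) :
    logStar b % 3 ≠ logStar (a ^ b) % 3 := by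
  have hlower := logStar_lt_of_two_pow_le hb (Nat.pow_le_pow_left ha b)
  have hupper : logStar (a ^ b) ≤ logStar b + 2 :=
    logStar_le_add_two_of_le_two_pow_mul_self <| by
      rw [pow_mul]; exact Nat.pow_le_pow_left hab b
  omega

def logStarColouring (n : ℕ) : Fin 3 :=
  ⟨logStar n % 3, Nat.mod_lt _ (by norm_num)⟩

lemma logStarColouring_ne_pow {a b : ℕ} (ha : 2 ≤ a) (hb : 0 < b) (hab : a ≤ 2 ^ b) :
    logStarColouring b ≠ logStarColouring (a ^ b) :=
  fun h => logStar_mod_three_ne_pow ha hb hab (Fin.val_eq_of_eq h)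

/-- There is a finite colouring of ℕ with no monochromatic pair {b, a^b} where
2 ≤ a ≤ 2^b and b ≥ 2; in particular none of the quadruples {a, b, a^b, b^a}
with a, b ≥ 2 is monochromatic. -/
theorem no_mono_pair_b_pow :
    ∃ (k : ℕ) (f : ℕ → Fin k),
      (∀ a b : ℕ, 2 ≤ a → 2 ≤ b → a ≤ 2 ^ b → f b ≠ f (a ^ b)) ∧
      (∀ a b : ℕ, 2 ≤ a → 2 ≤ b →
        ¬(f a = f b ∧ f b = f (a ^ b) ∧ f (a ^ b) = f (b ^ a))) := by
  refine ⟨3, logStarColouring, fun a b ha hb hab => logStarColouring_ne_pow ha (by omega) hab, ?_⟩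
  rintro a b ha hb ⟨hab, hb_pow, hpow_pow⟩
  rcases le_total a b with h | h
  · exact logStarColouring_ne_pow ha (by omega) (h.trans Nat.lt_two_pow_self.le) hb_pow
  · exact logStarColouring_ne_pow hb (by omega) (h.trans Nat.lt_two_pow_self.le)
      (hab.trans (hb_pow.trans hpow_pow))
end

section
/- There exists a finite colouring of ℕ (with 16 colours) for which there is no monochromatic set of the form {x, y, x+y, a, b, a^b} with x, y, a, b ∈ ℕ (and a, b ≥ 1). In other words, the Schur pattern {x, y, x+y} and the exponential pattern {a, b, a^b} are inconsistent. -/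
/-!
Colour `n` by the pair `(n mod 4, ℓ(n) mod 4)`, where `ℓ(n)` is the largest `b` such that `n` is a
perfect `b`-th power. In a monochromatic set, `x ≡ y ≡ x + y (mod 4)` forces `x ≡ 0 (mod 4)`, hence
also `4 ∣ b`. Since `ℓ(a ^ b) = b ℓ(a)`, also `4 ∣ ℓ(a ^ b)`, and hence
`x`, `y`, `x + y` are all fourth powers, contradicting Fermat's Last Theorem for exponent 4.
-/

/-- The gcd of the exponents in the prime factorisation of `n`: for `n ≥ 2` the largest `b` such
that `n` is a perfect `b`-th power, and `0` for `n = 0, 1`. -/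
noncomputable def maxPowExponent (n : ℕ) : ℕ :=
  n.factorization.support.gcd n.factorization

lemma maxPowExponent_dvd_factorization (n p : ℕ) : maxPowExponent n ∣ n.factorization p := by
  by_cases hp : p ∈ n.factorization.support
  · exact Finset.gcd_dvd hp
  · simp [Finsupp.notMem_support_iff.mp hp]

lemma exists_eq_pow_of_dvd_maxPowExponent {n d : ℕ} (hn : n ≠ 0) (hd : d ∣ maxPowExponent n) :
    ∃ m, n = m ^ d := by
  refine ⟨n.factorization.prod fun p k => p ^ (k / d), ?_⟩
  conv_lhs => rw [← Nat.prod_factorization_pow_eq_self hn]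
  rw [Finsupp.prod, Finsupp.prod, ← Finset.prod_pow]
  refine Finset.prod_congr rfl fun p _ => ?_
  rw [← pow_mul, Nat.div_mul_cancel (hd.trans (maxPowExponent_dvd_factorization n p))]

lemma maxPowExponent_pow (a b : ℕ) : maxPowExponent (a ^ b) = b * maxPowExponent a := by
  rcases Nat.eq_zero_or_pos b with rfl | hb
  · simp [maxPowExponent]
  rw [maxPowExponent, Nat.factorization_pow, Finsupp.support_smul_eq hb.ne', Finsupp.coe_smul,
    maxPowExponent]
  simp only [Pi.smul_def, smul_eq_mul, Finset.gcd_mul_left, normalize_eq]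

lemma not_dvd_maxPowExponent_add {n x y : ℕ} (hFLT : FermatLastTheoremFor n) (hn : n ≠ 0)
    (hx : x ≠ 0) (hy : y ≠ 0) (hnx : n ∣ maxPowExponent x) (hny : n ∣ maxPowExponent y) :
    ¬n ∣ maxPowExponent (x + y) := by
  intro hnxy
  obtain ⟨u, rfl⟩ := exists_eq_pow_of_dvd_maxPowExponent hx hnx
  obtain ⟨v, rfl⟩ := exists_eq_pow_of_dvd_maxPowExponent hy hny
  obtain ⟨w, hw⟩ := exists_eq_pow_of_dvd_maxPowExponent (by omega) hnxy
  exact hFLT u v w (ne_zero_pow hn hx) (ne_zero_pow hn hy) (ne_zero_pow hn (by omega)) hw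

noncomputable def schurExpColouring (n : ℕ) : Fin 16 :=
  finProdFinEquiv (Fin.ofNat 4 n, Fin.ofNat 4 (maxPowExponent n))

lemma schurExpColouring_eq_iff {m n : ℕ} :
    schurExpColouring m = schurExpColouring n ↔
      m % 4 = n % 4 ∧ maxPowExponent m % 4 = maxPowExponent n % 4 := by
  simp only [schurExpColouring, Equiv.apply_eq_iff_eq, Prod.mk.injEq, Fin.ext_iff,
    Fin.val_ofNat]

/-- Schur triples and exponential triples are inconsistent: some 16-colouring of ℕ
admits no monochromatic set {x, y, x+y, a, b, a^b}. -/
theorem schur_exp_inconsistent :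
    ∃ f : ℕ → Fin 16, ∀ x y a b : ℕ, 1 ≤ x → 1 ≤ y → 1 ≤ a → 1 ≤ b →
      ¬(f x = f y ∧ f x = f (x + y) ∧ f x = f a ∧ f x = f b ∧ f x = f (a ^ b)) := by
  refine ⟨schurExpColouring, fun x y a b hx hy _ _ hmono => ?_⟩
  simp only [schurExpColouring_eq_iff] at hmono
  obtain ⟨⟨hy4, hyℓ⟩, ⟨hxy4, hxyℓ⟩, -, ⟨hb4, -⟩, -, hpowℓ⟩ := hmono
  have hb : 4 ∣ b := by omega
  have hpow : 4 ∣ maxPowExponent (a ^ b) := by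
    rw [maxPowExponent_pow]
    exact hb.mul_right _
  exact not_dvd_maxPowExponent_add (x := x) (y := y) fermatLastTheoremFour four_ne_zero
    (by omega) (by omega) (by omega) (by omega) (by omega)
end

section
/- Let a_1 < a_2 < ... be a lacunary sequence of positive reals, i.e. liminf a_{n+1}/a_n > 1. Then there exists a finite colouring f of ℝ such that there is no monochromatic pair {x, x + a_n} with x ∈ ℝ and n ∈ ℕ. -/
/-!
Eventually `a (n + 1) ≥ q a n` with `q > 1`, so after a finite initial segment the sequence
splits into finitely many subsequences growing by a factor at least `4` at each step. For such
a subsequence `b`, nested intervals give a single `t` with `t b m ∈ [3k + 1, 3k + 2] (k ∈ ℤ)`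
for every `m`, and then `x ↦ ⌊t x⌋ mod 3` separates `x` from `x + b m`. Each of the finitely
many initial terms `d` is handled by `t = d⁻¹`, and the product of all these colourings is the
required finite colouring.
-/

open Filter Set

theorem Int.cast_floor_ne_cast_floor_add {α : Type*} [Ring α] [LinearOrder α]
    [IsStrictOrderedRing α] [FloorRing α] (n : ℕ) (y δ : α) (k : ℤ)
    (h₁ : n * k + 1 ≤ δ) (h₂ : δ ≤ n * k + n - 1) :
    (⌊y⌋ : ZMod n) ≠ ⌊y + δ⌋ := by
  have hlo : ⌊y⌋ + (n * k + 1) ≤ ⌊y + δ⌋ := by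
    rw [← Int.floor_add_intCast]; exact Int.floor_mono (by push_cast; gcongr)
  have hhi : ⌊y + δ⌋ ≤ ⌊y⌋ + (n * k + n - 1) := by
    rw [← Int.floor_add_intCast]; exact Int.floor_mono (by push_cast; gcongr)
  rw [Ne, ZMod.intCast_eq_intCast_iff_dvd_sub]
  rintro ⟨c, hc⟩
  have : k < c := by nlinarith
  have : c < k + 1 := by nlinarith
  omega

/-- The colouring `x ↦ ⌊t x⌋ mod 3` then never gives `x` and `x + d` the same colour. -/
def Separates (t d : ℝ) : Prop := ∃ k : ℤ, 3 * k + 1 ≤ t * d ∧ t * d ≤ 3 * k + 2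

theorem Separates.floor_ne {t d : ℝ} (h : Separates t d) (x : ℝ) :
    (⌊t * x⌋ : ZMod 3) ≠ ⌊t * (x + d)⌋ := by
  obtain ⟨k, h₁, h₂⟩ := h
  rw [mul_add]
  exact Int.cast_floor_ne_cast_floor_add 3 _ _ k (by push_cast; linarith) (by push_cast; linarith)

theorem separates_inv_self {d : ℝ} (hd : d ≠ 0) : Separates d⁻¹ d :=
  ⟨0, by simp [hd]⟩

theorem exists_colouring_of_separates {ι : Type*} (S : Finset ℝ) (d : ι → ℝ)
    (hS : ∀ i, ∃ t ∈ S, Separates t (d i)) :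
    ∃ (k : ℕ) (f : ℝ → Fin k), ∀ (x : ℝ) (i : ι), f x ≠ f (x + d i) := by
  let colour : ℝ → S → ZMod 3 := fun x t => ⌊(t : ℝ) * x⌋
  refine ⟨_, Fintype.equivFin _ ∘ colour, fun x i hx => ?_⟩
  obtain ⟨t, ht, hsep⟩ := hS i
  exact hsep.floor_ne x (congrFun ((Fintype.equivFin _).injective hx) ⟨t, ht⟩)

/-- Left endpoints `u m` of nested intervals `[u m, u m + (b m)⁻¹]`, with `u m * b m ≡ 1 mod 3`:
the next one is the first admissible endpoint to the right of the current one. -/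
noncomputable def nestedLeft (b : ℕ → ℝ) : ℕ → ℝ
  | 0 => 1 / b 0
  | m + 1 => (3 * ⌈(nestedLeft b m * b (m + 1) - 1) / 3⌉ + 1) / b (m + 1)

theorem exists_nestedLeft_mul_eq {b : ℕ → ℝ} (hb : ∀ m, 0 < b m) (m : ℕ) :
    ∃ k : ℤ, nestedLeft b m * b m = 3 * k + 1 := by
  cases m with
  | zero => exact ⟨0, by simp [nestedLeft, (hb 0).ne']⟩
  | succ m => exact ⟨_, div_mul_cancel₀ _ (hb (m + 1)).ne'⟩

theorem nestedLeft_le_succ {b : ℕ → ℝ} (hb : ∀ m, 0 < b m) (m : ℕ) :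
    nestedLeft b m ≤ nestedLeft b (m + 1) := by
  rw [nestedLeft, le_div_iff₀ (hb (m + 1))]
  linarith [Int.le_ceil ((nestedLeft b m * b (m + 1) - 1) / 3)]

theorem nestedLeft_add_inv_succ_le {b : ℕ → ℝ} (hb : ∀ m, 0 < b m)
    (hgrowth : ∀ m, 4 * b m ≤ b (m + 1)) (m : ℕ) :
    nestedLeft b (m + 1) + (b (m + 1))⁻¹ ≤ nestedLeft b m + (b m)⁻¹ := by
  have hceil := Int.ceil_lt_add_one ((nestedLeft b m * b (m + 1) - 1) / 3)
  have hratio : 4 ≤ (b m)⁻¹ * b (m + 1) := by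
    rw [inv_mul_eq_div, le_div_iff₀ (hb m)]; exact hgrowth m
  rw [nestedLeft, div_add' _ _ _ (hb (m + 1)).ne', inv_mul_cancel₀ (hb (m + 1)).ne',
    div_le_iff₀ (hb (m + 1)), add_mul]
  linarith

theorem exists_forall_separates_of_four_mul_le {b : ℕ → ℝ} (hb : ∀ m, 0 < b m)
    (hgrowth : ∀ m, 4 * b m ≤ b (m + 1)) : ∃ t, ∀ m, Separates t (b m) := by
  have hnest := Monotone.ciSup_mem_iInter_Icc_of_antitone
    (monotone_nat_of_le_succ (nestedLeft_le_succ hb))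
    (antitone_nat_of_succ_le (nestedLeft_add_inv_succ_le hb hgrowth))
    (fun m => le_add_of_nonneg_right (inv_nonneg.2 (hb m).le))
  refine ⟨⨆ m, nestedLeft b m, fun m => ?_⟩
  obtain ⟨k, hk⟩ := exists_nestedLeft_mul_eq hb m
  obtain ⟨hlo, hhi⟩ := mem_iInter.1 hnest m
  refine ⟨k, ?_, ?_⟩
  · rw [← hk]; exact mul_le_mul_of_nonneg_right hlo (hb m).le
  · calc _ ≤ (nestedLeft b m + (b m)⁻¹) * b m := mul_le_mul_of_nonneg_right hhi (hb m).le
      _ = 3 * k + 2 := by rw [add_mul, hk, inv_mul_cancel₀ (hb m).ne']; ring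

theorem eventually_mul_le_succ_of_lt_liminf {a : ℕ → ℝ} (hpos : ∀ n, 0 < a n) {q : ℝ}
    (hq : q < atTop.liminf fun n => a (n + 1) / a n) : ∀ᶠ n in atTop, q * a n ≤ a (n + 1) := by
  have hbdd : IsBoundedUnder (· ≥ ·) atTop fun n => a (n + 1) / a n :=
    isBoundedUnder_of ⟨0, fun n => (div_pos (hpos (n + 1)) (hpos n)).le⟩
  filter_upwards [eventually_lt_of_lt_liminf hq hbdd] with n hn
  exact (le_div_iff₀ (hpos n)).1 hn.le

theorem pow_mul_le_add_of_mul_le_succ {a : ℕ → ℝ} {q : ℝ} {N : ℕ} (hq : 0 ≤ q)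
    (h : ∀ n, N ≤ n → q * a n ≤ a (n + 1)) (s : ℕ) {n : ℕ} (hn : N ≤ n) :
    q ^ s * a n ≤ a (n + s) := by
  induction s with
  | zero => simp
  | succ s ih =>
    calc q ^ (s + 1) * a n = q * (q ^ s * a n) := by ring
      _ ≤ q * a (n + s) := mul_le_mul_of_nonneg_left ih hq
      _ ≤ a (n + (s + 1)) := h _ (hn.trans (Nat.le_add_right n s))

theorem exists_four_mul_le_add_of_lacunary {a : ℕ → ℝ} (hpos : ∀ n, 0 < a n)
    (hlac : 1 < atTop.liminf fun n => a (n + 1) / a n) :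
    ∃ N r, 0 < r ∧ ∀ n, N ≤ n → 4 * a n ≤ a (n + r) := by
  obtain ⟨q, hq1, hq⟩ := exists_between hlac
  obtain ⟨N, hN⟩ := eventually_atTop.1 (eventually_mul_le_succ_of_lt_liminf hpos hq)
  obtain ⟨r, hr⟩ := pow_unbounded_of_one_lt 4 hq1
  have hr0 : 0 < r := Nat.pos_of_ne_zero fun h => by norm_num [h] at hr
  refine ⟨N, r, hr0, fun n hn => ?_⟩
  calc 4 * a n ≤ q ^ r * a n := mul_le_mul_of_nonneg_right hr.le (hpos n).le
    _ ≤ a (n + r) := pow_mul_le_add_of_mul_le_succ (by linarith) hN r hn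

theorem exists_finset_separates_of_four_mul_le_add {a : ℕ → ℝ} (hpos : ∀ n, 0 < a n)
    {N r : ℕ} (hr : 0 < r) (hgrowth : ∀ n, N ≤ n → 4 * a n ≤ a (n + r)) :
    ∃ S : Finset ℝ, ∀ n, N ≤ n → ∃ t ∈ S, Separates t (a n) := by
  have hclass (i : Fin r) : ∃ t, ∀ m, Separates t (a (N + i + m * r)) :=
    exists_forall_separates_of_four_mul_le (fun m => hpos _) fun m => by
      rw [add_mul, one_mul, ← add_assoc]; exact hgrowth _ (by omega)
  choose t ht using hclass
  refine ⟨Finset.univ.image t, fun n hn => ⟨t ⟨(n - N) % r, Nat.mod_lt _ hr⟩,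
    Finset.mem_image_of_mem _ (Finset.mem_univ _), ?_⟩⟩
  convert ht _ ((n - N) / r) using 2
  have := Nat.mod_add_div' (n - N) r
  dsimp only
  omega

theorem lacunary_no_mono_difference_general (a : ℕ → ℝ)
    (hpos : ∀ n, 0 < a n)
    (hlac : 1 < Filter.atTop.liminf (fun n => a (n + 1) / a n)) :
    ∃ (k : ℕ) (f : ℝ → Fin k), ∀ (x : ℝ) (n : ℕ), f x ≠ f (x + a n) := by
  obtain ⟨N, r, hr, hgrowth⟩ := exists_four_mul_le_add_of_lacunary hpos hlac
  obtain ⟨S, hS⟩ := exists_finset_separates_of_four_mul_le_add hpos hr hgrowth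
  refine exists_colouring_of_separates (S ∪ (Finset.range N).image fun n => (a n)⁻¹) a
    fun n => ?_
  rcases lt_or_ge n N with hn | hn
  · exact ⟨_, Finset.mem_union_right _ (Finset.mem_image_of_mem _ (Finset.mem_range.2 hn)),
      separates_inv_self (hpos n).ne'⟩
  · obtain ⟨t, ht, hsep⟩ := hS n hn
    exact ⟨t, Finset.mem_union_left _ ht, hsep⟩

/-- A lacunary sequence of positive reals admits a finite colouring of ℝ with no
monochromatic pair {x, x + a_n}. -/
theorem lacunary_no_mono_difference (a : ℕ → ℝ)
    (hpos : ∀ n, 0 < a n) (hmono : StrictMono a)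
    (hlac : 1 < Filter.atTop.liminf (fun n => a (n + 1) / a n)) :
    ∃ (k : ℕ) (f : ℝ → Fin k), ∀ (x : ℝ) (n : ℕ), f x ≠ f (x + a n) :=
  lacunary_no_mono_difference_general a hpos hlac
end

section
/- There exists a finite colouring of ℕ such that there is no monochromatic pair {a, a^{b^b}} with a = 2^s and b = 2^t for positive integers s, t. -/
/-!
Write `g x = ν₂(ν₂ x)`. Then `g (2^s) = ν₂ s` and `g ((2^s)^((2^t)^(2^t))) = ν₂ s + t 2^t`, so it
suffices to colour `ℕ` so that `m` and `m + n 2^n` always get different colours. The differences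
`n 2^n` with `n` of fixed parity grow by a factor at least `3`, and for such a lacunary sequence
`(e_j)` nested intervals give a real `α` with every `α e_j` at distance at least `1/4` from `ℤ`;
colouring `m` by the quarter of `[0, 1)` containing the fractional part of `α m` then separates
`m` from every `m + e_j`. The two parities together need `4 * 4` colours.
-/

open Set

theorem quarter_le_abs_mul_sub_intCast {q z : ℝ} {k : ℤ} (hq : 0 < q)
    (hz : z ∈ Icc ((k + 1 / 4) / q) ((k + 3 / 4) / q)) (n : ℤ) : 1 / 4 ≤ |z * q - n| := by
  rw [mem_Icc, div_le_iff₀ hq, le_div_iff₀ hq] at hz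
  rcases le_or_gt n k with h | h
  · have : (n : ℝ) ≤ k := by exact_mod_cast h
    exact le_abs.2 (Or.inl (by linarith))
  · have : (k : ℝ) + 1 ≤ n := by exact_mod_cast h
    exact le_abs.2 (Or.inr (by linarith))

theorem exists_Icc_subset_Icc_of_three_mul_le {q q' : ℝ} (hq : 0 < q) (hqq' : 3 * q ≤ q')
    (k : ℤ) : ∃ k' : ℤ,
      Icc ((k' + 1 / 4) / q') ((k' + 3 / 4) / q') ⊆ Icc ((k + 1 / 4) / q) ((k + 3 / 4) / q) := by
  have hq' : 0 < q' := by linarith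
  set u := (k + 1 / 4) * q' / q
  have huq : u * q = (k + 1 / 4) * q' := div_mul_cancel₀ _ hq.ne'
  refine ⟨⌈u - 1 / 4⌉, Icc_subset_Icc ?_ ?_⟩
  · rw [div_le_div_iff₀ hq hq']
    nlinarith [Int.le_ceil (u - 1 / 4)]
  · rw [div_le_div_iff₀ hq' hq]
    nlinarith [Int.ceil_lt_add_one (u - 1 / 4)]

theorem exists_forall_quarter_le_abs_mul_sub_intCast {e : ℕ → ℝ} (he : ∀ j, 0 < e j)
    (hgrowth : ∀ j, 3 * e j ≤ e (j + 1)) : ∃ α : ℝ, ∀ j (n : ℤ), 1 / 4 ≤ |α * e j - n| := by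
  choose next hnext using fun j => exists_Icc_subset_Icc_of_three_mul_le (he j) (hgrowth j)
  let k : ℕ → ℤ := fun j => Nat.rec (motive := fun _ => ℤ) 0 next j
  let I : ℕ → Set ℝ := fun j => Icc ((k j + 1 / 4) / e j) ((k j + 3 / 4) / e j)
  have hnested : ∀ j, I (j + 1) ⊆ I j := fun j => hnext j (k j)
  obtain ⟨α, hα⟩ := IsCompact.nonempty_iInter_of_sequence_nonempty_isCompact_isClosed I hnested
    (fun j => nonempty_Icc.2 (by gcongr; exacts [(he j).le, by norm_num])) isCompact_Icc
    (fun _ => isClosed_Icc)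
  exact ⟨α, fun j => quarter_le_abs_mul_sub_intCast (he j) (mem_iInter.1 hα j)⟩

noncomputable def quarterColor (x : ℝ) : Fin 4 :=
  ⟨⌊4 * Int.fract x⌋₊, (Nat.floor_lt (by positivity)).2 (by
    have := Int.fract_lt_one x
    push_cast
    linarith)⟩

theorem exists_abs_sub_sub_intCast_lt_of_quarterColor_eq {x y : ℝ}
    (h : quarterColor x = quarterColor y) : ∃ n : ℤ, |y - x - n| < 1 / 4 := by
  have hfloor : ⌊4 * Int.fract x⌋₊ = ⌊4 * Int.fract y⌋₊ := congrArg Fin.val h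
  have hx := Nat.floor_le (by positivity : 0 ≤ 4 * Int.fract x)
  have hy := Nat.floor_le (by positivity : 0 ≤ 4 * Int.fract y)
  have hx' := Nat.lt_floor_add_one (4 * Int.fract x)
  have hy' := Nat.lt_floor_add_one (4 * Int.fract y)
  rw [hfloor] at hx hx'
  refine ⟨⌊y⌋ - ⌊x⌋, abs_lt.2 ⟨?_, ?_⟩⟩ <;>
  · push_cast
    linarith [Int.self_sub_floor x, Int.self_sub_floor y]

theorem exists_coloring_forall_ne_add_of_lacunary {e : ℕ → ℕ} (he : ∀ j, 0 < e j)
    (hgrowth : ∀ j, 3 * e j ≤ e (j + 1)) : ∃ c : ℕ → Fin 4, ∀ m j, c m ≠ c (m + e j) := by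
  obtain ⟨α, hα⟩ := exists_forall_quarter_le_abs_mul_sub_intCast (e := fun j => (e j : ℝ))
    (fun j => by exact_mod_cast he j) (fun j => by exact_mod_cast hgrowth j)
  refine ⟨fun m => quarterColor (α * m), fun m j hc => ?_⟩
  obtain ⟨n, hn⟩ := exists_abs_sub_sub_intCast_lt_of_quarterColor_eq hc
  rw [Nat.cast_add, mul_add, add_sub_cancel_left] at hn
  exact (hα j n).not_gt hn

theorem three_mul_mul_two_pow_le (n : ℕ) : 3 * (n * 2 ^ n) ≤ (n + 2) * 2 ^ (n + 2) := by
  rw [pow_add]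
  nlinarith [Nat.one_le_two_pow (n := n)]

theorem exists_coloring_forall_ne_add_mul_two_pow :
    ∃ c : ℕ → Fin (4 * 4), ∀ m n, 1 ≤ n → c m ≠ c (m + n * 2 ^ n) := by
  have hparity (r : ℕ) := exists_coloring_forall_ne_add_of_lacunary
    (e := fun j => (2 * j + r + 1) * 2 ^ (2 * j + r + 1)) (fun j => by positivity)
    (fun j => by simpa only [show 2 * (j + 1) + r + 1 = 2 * j + r + 1 + 2 by ring]
      using three_mul_mul_two_pow_le (2 * j + r + 1))
  obtain ⟨c₀, hc₀⟩ := hparity 0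
  obtain ⟨c₁, hc₁⟩ := hparity 1
  refine ⟨fun m => finProdFinEquiv (c₀ m, c₁ m), fun m n hn heq => ?_⟩
  obtain ⟨h₀, h₁⟩ := Prod.ext_iff.1 (finProdFinEquiv.injective heq)
  obtain ⟨j, rfl | rfl⟩ : ∃ j, n = 2 * j + 0 + 1 ∨ n = 2 * j + 1 + 1 := ⟨(n - 1) / 2, by omega⟩
  exacts [hc₀ m j h₀, hc₁ m j h₁]

theorem padicValNat_padicValNat_pow_mul_pow (p : ℕ) [Fact p.Prime] {s : ℕ} (hs : s ≠ 0)
    (u : ℕ) : padicValNat p (padicValNat p (p ^ (s * p ^ u))) = padicValNat p s + u := by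
  rw [padicValNat.prime_pow, padicValNat.mul hs (pow_ne_zero _ (Fact.out : p.Prime).ne_zero),
    padicValNat.prime_pow]

/-- There is a finite colouring of ℕ with no monochromatic pair {a, a^(b^b)}
with a = 2^s, b = 2^t, s, t ≥ 1. -/
theorem no_mono_a_pow_b_pow_b_powers_of_two :
    ∃ (k : ℕ) (f : ℕ → Fin k), ∀ s t : ℕ, 1 ≤ s → 1 ≤ t →
      f (2 ^ s) ≠ f ((2 ^ s) ^ ((2 ^ t) ^ (2 ^ t))) := by
  obtain ⟨c, hc⟩ := exists_coloring_forall_ne_add_mul_two_pow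
  refine ⟨_, fun x => c (padicValNat 2 (padicValNat 2 x)), fun s t hs ht => ?_⟩
  have hleft : padicValNat 2 (padicValNat 2 (2 ^ s)) = padicValNat 2 s := by
    rw [padicValNat.prime_pow]
  have hright : padicValNat 2 (padicValNat 2 ((2 ^ s) ^ ((2 ^ t) ^ (2 ^ t))))
      = padicValNat 2 s + t * 2 ^ t := by
    rw [← pow_mul, ← pow_mul, padicValNat_padicValNat_pow_mul_pow 2 (by omega)]
  simpa only [hleft, hright] using hc _ t ht
end

section
/- There exists a finite colouring of ℕ such that there is no monochromatic pair {a, a^(b^(b^b))} with a, b > 1. -/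
/-!
Colour `a` by `c (Ω (Ω a))`, where `Ω` counts prime factors with multiplicity. Since
`Ω (a ^ N) = N * Ω a`, we get `Ω (Ω (a ^ b ^ b ^ b)) = Ω (Ω a) + b ^ b * Ω b`, so it suffices
that `c` is a finite colouring of `ℝ` with no monochromatic pair `{y, y + b ^ b * Ω b}`.
These differences at least triple from `b` to `b + 1`; for such a lacunary sequence `d`,
nested intervals produce a `t` with every `d n * t` at distance at least `1/4` from `ℤ`, and
colouring `y` by the quarter of `[0, 1)` containing the fractional part of `t * y` separates
`y` from `y + d n`.
-/

open ArithmeticFunction Set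
open scoped ArithmeticFunction.Omega

section Lacunary

variable {d : ℕ → ℝ}

theorem fract_mul_mem_Icc_of_mem_Icc {δ x t : ℝ} (hδ : 0 < δ) (hx : Int.fract (δ * x) = 1 / 4)
    (ht : t ∈ Icc x (x + 1 / (2 * δ))) : Int.fract (δ * t) ∈ Icc (1 / 4 : ℝ) (3 / 4) := by
  have hδx : δ * x = ⌊δ * x⌋ + 1 / 4 := by rw [← hx, Int.floor_add_fract]
  have hlo : δ * x ≤ δ * t := mul_le_mul_of_nonneg_left ht.1 hδ.le
  have hhi : δ * t ≤ δ * x + 1 / 2 :=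
    calc δ * t ≤ δ * (x + 1 / (2 * δ)) := mul_le_mul_of_nonneg_left ht.2 hδ.le
      _ = δ * x + 1 / 2 := by field_simp
  have hfloor : ⌊δ * t⌋ = ⌊δ * x⌋ := Int.floor_eq_iff.2 ⟨by linarith, by linarith⟩
  rw [Int.fract, hfloor]
  constructor <;> linarith

/-- `lacunaryLeft d (n + 1)` is the least point `≥ lacunaryLeft d n` at which
`d (n + 1) * ·` lies in `ℤ + 1/4`. -/
noncomputable def lacunaryLeft (d : ℕ → ℝ) : ℕ → ℝ
  | 0 => 1 / (4 * d 0)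
  | n + 1 => (⌈d (n + 1) * lacunaryLeft d n - 1 / 4⌉ + 1 / 4) / d (n + 1)

lemma fract_mul_lacunaryLeft (hd : ∀ n, 0 < d n) (n : ℕ) :
    Int.fract (d n * lacunaryLeft d n) = 1 / 4 := by
  cases n with
  | zero =>
    rw [lacunaryLeft, mul_one_div, mul_comm 4, ← div_div, div_self (hd 0).ne']
    exact Int.fract_eq_self.2 ⟨by norm_num, by norm_num⟩
  | succ n =>
    rw [lacunaryLeft, mul_div_cancel₀ _ (hd _).ne', Int.fract_intCast_add]
    exact Int.fract_eq_self.2 ⟨by norm_num, by norm_num⟩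

lemma lacunaryLeft_le_succ (hd : ∀ n, 0 < d n) (n : ℕ) :
    lacunaryLeft d n ≤ lacunaryLeft d (n + 1) := by
  rw [lacunaryLeft, le_div_iff₀ (hd _), mul_comm]
  linarith [Int.le_ceil (d (n + 1) * lacunaryLeft d n - 1 / 4)]

lemma lacunaryLeft_succ_add_le (hd : ∀ n, 0 < d n) {n : ℕ} (hratio : 3 * d n ≤ d (n + 1)) :
    lacunaryLeft d (n + 1) + 1 / (2 * d (n + 1)) ≤ lacunaryLeft d n + 1 / (2 * d n) := by
  have hdn := hd n
  have hdn' := hd (n + 1)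
  have hceil := Int.ceil_lt_add_one (d (n + 1) * lacunaryLeft d n - 1 / 4)
  have hgap : 3 / (2 * d (n + 1)) ≤ 1 / (2 * d n) := by
    rw [div_le_div_iff₀ (by positivity) (by positivity)]
    linarith
  calc lacunaryLeft d (n + 1) + 1 / (2 * d (n + 1))
      = (⌈d (n + 1) * lacunaryLeft d n - 1 / 4⌉ + 3 / 4) / d (n + 1) := by
        rw [lacunaryLeft]; field_simp; ring
    _ ≤ (d (n + 1) * lacunaryLeft d n + 3 / 2) / d (n + 1) :=
        div_le_div_of_nonneg_right (by linarith) hdn'.le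
    _ = lacunaryLeft d n + 3 / (2 * d (n + 1)) := by field_simp
    _ ≤ lacunaryLeft d n + 1 / (2 * d n) := by gcongr

theorem exists_forall_fract_mul_mem_Icc_of_lacunary (h0 : 0 < d 0)
    (hratio : ∀ n, 3 * d n ≤ d (n + 1)) :
    ∃ t : ℝ, ∀ n, Int.fract (d n * t) ∈ Icc (1 / 4 : ℝ) (3 / 4) := by
  have hd : ∀ n, 0 < d n := fun n => by
    induction n with
    | zero => exact h0
    | succ n ih => linarith [hratio n]
  have hnested := Monotone.ciSup_mem_iInter_Icc_of_antitone
    (f := lacunaryLeft d) (g := fun n => lacunaryLeft d n + 1 / (2 * d n))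
    (monotone_nat_of_le_succ (lacunaryLeft_le_succ hd))
    (antitone_nat_of_succ_le fun n => lacunaryLeft_succ_add_le hd (hratio n))
    (fun n => by have := hd n; simp only [le_add_iff_nonneg_right]; positivity)
  exact ⟨_, fun n => fract_mul_mem_Icc_of_mem_Icc (hd n) (fract_mul_lacunaryLeft hd n)
    (mem_iInter.1 hnested n)⟩

end Lacunary

/-- The quarter of `[0, 1)` containing `Int.fract (t * y)`. -/
noncomputable def quarterColour (t y : ℝ) : ZMod 4 := ⌊4 * (t * y)⌋

theorem quarterColour_ne_add {t δ : ℝ} (h : Int.fract (δ * t) ∈ Icc (1 / 4 : ℝ) (3 / 4))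
    (y : ℝ) : quarterColour t y ≠ quarterColour t (y + δ) := by
  simp only [quarterColour, Ne]
  set z := 4 * (t * y)
  have hshift : 4 * (t * (y + δ)) = z + 4 * Int.fract (δ * t) + (4 * ⌊δ * t⌋ : ℤ) := by
    rw [Int.fract]; push_cast; ring
  have hlo : ⌊z⌋ + 1 ≤ ⌊z + 4 * Int.fract (δ * t)⌋ := by
    rw [Int.le_floor]; push_cast; linarith [Int.floor_le z, h.1]
  have hhi : ⌊z + 4 * Int.fract (δ * t)⌋ < ⌊z⌋ + 4 := by
    rw [Int.floor_lt]; push_cast; linarith [Int.lt_floor_add_one z, h.2]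
  rw [hshift, Int.floor_add_intCast, ZMod.intCast_eq_intCast_iff_dvd_sub]
  omega

lemma two_pow_cardFactors_le {n : ℕ} (hn : n ≠ 0) : 2 ^ Ω n ≤ n := by
  calc 2 ^ Ω n ≤ n.primeFactorsList.prod :=
        List.pow_card_le_prod _ _ fun p hp => (Nat.prime_of_mem_primeFactorsList hp).two_le
    _ = n := Nat.prod_primeFactorsList hn

lemma three_mul_le_two_pow_succ_add_two (k : ℕ) : 3 * k ≤ 2 ^ (k + 1) + 2 := by
  induction k with
  | zero => norm_num
  | succ k ih =>
    have := k.lt_two_pow_self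
    simp only [pow_succ] at ih ⊢
    omega

lemma three_mul_cardFactors_le (n : ℕ) : 3 * Ω n ≤ 2 * (n + 1) := by
  rcases eq_or_ne n 0 with rfl | hn
  · simp
  · have := two_pow_cardFactors_le hn
    have := three_mul_le_two_pow_succ_add_two (Ω n)
    rw [pow_succ] at this
    omega

lemma two_mul_pow_self_le {n : ℕ} (hn : n ≠ 0) : 2 * n ^ n ≤ (n + 1) ^ n := by
  have := pow_add_mul_le_add_pow (a := n) (b := 1) n.zero_le (by omega) n
  rwa [Nat.cast_id, mul_one, ← pow_succ', Nat.sub_add_cancel (by omega), ← two_mul] at this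

lemma three_mul_pow_self_mul_cardFactors_le (n : ℕ) :
    3 * (n ^ n * Ω n) ≤ (n + 1) ^ (n + 1) * Ω (n + 1) := by
  rcases eq_or_ne n 0 with rfl | hn
  · simp
  · have hΩ : 1 ≤ Ω (n + 1) := cardFactors_pos_iff_one_lt.2 (by omega)
    calc 3 * (n ^ n * Ω n) = (3 * Ω n) * n ^ n := by ring
      _ ≤ (n + 1) * (2 * n ^ n) := by
        nlinarith [three_mul_cardFactors_le n, pow_pos (Nat.pos_of_ne_zero hn) n]
      _ ≤ (n + 1) * (n + 1) ^ n := Nat.mul_le_mul_left _ (two_mul_pow_self_le hn)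
      _ = (n + 1) ^ (n + 1) := by rw [pow_succ']
      _ ≤ (n + 1) ^ (n + 1) * Ω (n + 1) := Nat.le_mul_of_pos_right _ hΩ

lemma cardFactors_cardFactors_pow_pow_pow {a b : ℕ} (ha : 1 < a) (hb : b ≠ 0) :
    Ω (Ω (a ^ b ^ b ^ b)) = Ω (Ω a) + b ^ b * Ω b := by
  rw [cardFactors_pow, cardFactors_mul (pow_ne_zero _ hb) (cardFactors_pos_iff_one_lt.2 ha).ne',
    cardFactors_pow, add_comm]

/-- There is a finite colouring of ℕ with no monochromatic pair {a, a^(b^(b^b))}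
with a, b > 1. -/
theorem no_mono_a_pow_tower :
    ∃ (k : ℕ) (f : ℕ → Fin k), ∀ a b : ℕ, 1 < a → 1 < b →
      f a ≠ f (a ^ (b ^ (b ^ b))) := by
  obtain ⟨t, ht⟩ := exists_forall_fract_mul_mem_Icc_of_lacunary
    (d := fun n => (((n + 2) ^ (n + 2) * Ω (n + 2) : ℕ) : ℝ))
    (by simp)
    (fun n => by exact_mod_cast three_mul_pow_self_mul_cardFactors_le (n + 2))
  -- `ZMod 4` unfolds to `Fin 4`.
  refine ⟨4, fun a => quarterColour t (Ω (Ω a)), fun a b ha hb => ?_⟩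
  obtain ⟨n, rfl⟩ : ∃ n, b = n + 2 := ⟨b - 2, by omega⟩
  show quarterColour t _ ≠ quarterColour t _
  rw [cardFactors_cardFactors_pow_pow_pow ha (by omega), Nat.cast_add]
  exact quarterColour_ne_add (ht n) _
end
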